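/- arXiv:0803.0890 — 2 statements merged into one kernel-verified Lean document; each statement's English description precedes it below -/
import Mathlib

section
/- Assume P is the identity matrix and X_{i,j} = 0 whenever dist(i,j) > R. For all i, j ∈ L and all t ∈ ℝ one has √‖X‖ · |C^{xx}_{i,j}(t)| ≤ τ^{2⌈d_{i,j}⌉+1} · cosh(τ)/(2⌈d_{i,j}⌉+1)!. -/
/-!
Only the terms with `n ≥ c` survive in the series: `(Xⁿ)ᵢⱼ` is a sum over products along index
chains of `n` steps of `X`, each of which moves graph distance at most `R`, so it vanishes when
`n R < dist(i,j)`. Each term is bounded by `τ^(2n+1)/(2n+1)!` because `|(Xⁿ)ᵢⱼ| ≤ ‖X‖ⁿ`, and the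
tail of this sinh series from `n = c` is at most `τ^(2c+1)/(2c+1)! · cosh τ`, since
`(2c+1)! (2m)! ≤ (2c+1+2m)!`.
-/

/-- The ℓ²→ℓ² operator norm of a real matrix. -/
noncomputable def l2OpNorm {V : Type*} [Fintype V] [DecidableEq V] (M : Matrix V V ℝ) : ℝ :=
  ‖Matrix.toEuclideanCLM (𝕜 := ℝ) M‖

/-- For `P = 𝟙`: `C^{xx}_{i,j}(t) = ∑_{n≥0} (−1)^n t^{2n+1} (X^n)_{i,j}/(2n+1)!`,
which equals `i[x̂_i(t), x̂_j]`. -/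
noncomputable def Cxx {V : Type*} [Fintype V] [DecidableEq V]
    (X : Matrix V V ℝ) (i j : V) (t : ℝ) : ℝ :=
  ∑' n : ℕ, (-1 : ℝ) ^ n * t ^ (2 * n + 1) * ((X ^ n) i j) / (Nat.factorial (2 * n + 1))

open Real
open scoped Nat
open scoped Matrix.Norms.L2Operator

namespace Matrix

theorem norm_apply_le_l2_opNorm {𝕜 m n : Type*} [RCLike 𝕜] [Fintype m] [Fintype n]
    [DecidableEq n] (M : Matrix m n 𝕜) (i : m) (j : n) : ‖M i j‖ ≤ ‖M‖ :=
  calc ‖M i j‖ = ‖(EuclideanSpace.equiv m 𝕜).symm (M *ᵥ EuclideanSpace.single j 1) i‖ := by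
        simp
    _ ≤ ‖(EuclideanSpace.equiv m 𝕜).symm (M *ᵥ EuclideanSpace.single j 1)‖ :=
        PiLp.norm_apply_le _ _
    _ ≤ ‖M‖ * ‖EuclideanSpace.single j (1 : 𝕜)‖ := M.l2_opNorm_mulVec _
    _ = ‖M‖ := by simp

theorem norm_pow_apply_le_l2_opNorm_pow {𝕜 n : Type*} [RCLike 𝕜] [Fintype n] [DecidableEq n]
    (M : Matrix n n 𝕜) (i j : n) : ∀ k : ℕ, ‖(M ^ k) i j‖ ≤ ‖M‖ ^ k
  | 0 => by by_cases h : i = j <;> simp [h]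
  | k + 1 => (M ^ (k + 1)).norm_apply_le_l2_opNorm i j |>.trans (norm_pow_le' M k.succ_pos)

theorem pow_apply_eq_zero_of_mul_lt_dist {α V : Type*} [Semiring α] [Fintype V] [DecidableEq V]
    {G : SimpleGraph V} (hG : G.Connected) {R : ℕ} {X : Matrix V V α}
    (hX : ∀ i j, R < G.dist i j → X i j = 0) :
    ∀ (k : ℕ) {i j : V}, k * R < G.dist i j → (X ^ k) i j = 0
  | 0, i, j, h => one_apply_ne (by rintro rfl; simp at h)
  | k + 1, i, j, h => by
    rw [pow_succ', mul_apply]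
    refine Finset.sum_eq_zero fun l _ => ?_
    by_cases hil : R < G.dist i l
    · rw [hX i l hil, zero_mul]
    · have htri := hG.dist_triangle (u := i) (v := l) (w := j)
      rw [pow_apply_eq_zero_of_mul_lt_dist hG hX k (by rw [Nat.succ_mul] at h; omega), mul_zero]

end Matrix

theorem Nat.mul_lt_of_lt_toNat_ceil_div {k a b : ℕ} (h : k < (⌈(a : ℝ) / b⌉).toNat) :
    k * b < a := by
  have hk : (k : ℝ) < a / b := Int.lt_ceil.mp (Int.lt_toNat.mp h)
  rcases b.eq_zero_or_pos with rfl | hb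
  · rw [Nat.cast_zero, div_zero] at hk
    exact absurd hk (not_lt.mpr k.cast_nonneg)
  · exact_mod_cast (lt_div_iff₀ (Nat.cast_pos.mpr hb)).mp hk

theorem pow_div_factorial_add_le {x : ℝ} (hx : 0 ≤ x) (a b : ℕ) :
    x ^ (a + b) / (a + b)! ≤ x ^ a / a ! * (x ^ b / b !) := by
  rw [div_mul_div_comm, pow_add]
  gcongr
  exact_mod_cast Nat.le_of_dvd (Nat.factorial_pos _)
    (Nat.factorial_mul_factorial_dvd_factorial_add a b)

theorem abs_tsum_le_of_abs_le_sinh_term {x : ℝ} (hx : 0 ≤ x) {f : ℕ → ℝ} (c : ℕ)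
    (hf : ∀ n, |f n| ≤ x ^ (2 * n + 1) / (2 * n + 1)!) (hc : ∀ n < c, f n = 0) :
    |∑' n, f n| ≤ x ^ (2 * c + 1) * cosh x / (2 * c + 1)! := by
  have hsinh : Summable fun n : ℕ => x ^ (2 * n + 1) / (2 * n + 1)! :=
    (Real.summable_pow_div_factorial x).comp_injective fun a b h => by simp at h; omega
  have hsum : Summable f := hsinh.of_norm_bounded hf
  have hshift : ∑' n, f n = ∑' m, f (m + c) := by
    rw [← hsum.sum_add_tsum_nat_add c,
      Finset.sum_eq_zero fun n hn => hc n (Finset.mem_range.mp hn), zero_add]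
  have hterm (m : ℕ) : ‖f (m + c)‖ ≤ x ^ (2 * c + 1) / (2 * c + 1)! * (x ^ (2 * m) / (2 * m)!) :=
    calc ‖f (m + c)‖ ≤ x ^ (2 * c + 1 + 2 * m) / (2 * c + 1 + 2 * m)! := by
          rw [Real.norm_eq_abs, show 2 * c + 1 + 2 * m = 2 * (m + c) + 1 by ring]
          exact hf (m + c)
      _ ≤ _ := pow_div_factorial_add_le hx _ _
  rw [hshift, mul_div_right_comm]
  exact tsum_of_norm_bounded ((Real.hasSum_cosh x).mul_left _) hterm

theorem abs_sqrt_mul_Cxx_term_le {V : Type*} [Fintype V] [DecidableEq V] (X : Matrix V V ℝ)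
    (i j : V) (t : ℝ) (n : ℕ) :
    |√(l2OpNorm X) * ((-1) ^ n * t ^ (2 * n + 1) * (X ^ n) i j / (2 * n + 1)!)| ≤
      (√(l2OpNorm X) * |t|) ^ (2 * n + 1) / (2 * n + 1)! := by
  have hXn : |(X ^ n) i j| ≤ l2OpNorm X ^ n := X.norm_pow_apply_le_l2_opNorm_pow i j n
  have hsqrt : √(l2OpNorm X) ^ (2 * n + 1) = √(l2OpNorm X) * l2OpNorm X ^ n := by
    rw [pow_succ', pow_mul, sq_sqrt (show 0 ≤ l2OpNorm X from norm_nonneg _)]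
  calc _ = √(l2OpNorm X) * (|t| ^ (2 * n + 1) * |(X ^ n) i j|) / (2 * n + 1)! := by
        simp [abs_mul, abs_div, abs_pow, mul_div_assoc]
    _ ≤ √(l2OpNorm X) * (|t| ^ (2 * n + 1) * l2OpNorm X ^ n) / (2 * n + 1)! := by gcongr
    _ = _ := by
        rw [mul_pow, hsqrt]
        ring

theorem lieb_robinson_local_P_one_xx_general {V : Type*} [Fintype V] [DecidableEq V]
    (G : SimpleGraph V) (hconn : G.Connected) (R : ℕ)
    (X : Matrix V V ℝ)
    (hXloc : ∀ i j : V, R < G.dist i j → X i j = 0)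
    (i j : V) (t : ℝ) :
    let τ : ℝ := Real.sqrt (l2OpNorm X) * |t|
    let c : ℕ := (⌈(G.dist i j : ℝ) / R⌉).toNat
    Real.sqrt (l2OpNorm X) * |Cxx X i j t| ≤
      τ ^ (2 * c + 1) * Real.cosh τ / (Nat.factorial (2 * c + 1)) := by
  intro τ c
  rw [← abs_of_nonneg (sqrt_nonneg (l2OpNorm X)), ← abs_mul, Cxx, ← tsum_mul_left]
  refine abs_tsum_le_of_abs_le_sinh_term (by positivity) c (abs_sqrt_mul_Cxx_term_le X i j t)
    fun n hn => ?_
  rw [X.pow_apply_eq_zero_of_mul_lt_dist hconn hXloc n (Nat.mul_lt_of_lt_toNat_ceil_div hn)]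
  simp

/-- **Lieb-Robinson bound for local couplings and `P = 𝟙`**, `xx` commutator:
`√‖X‖ · |C^{xx}_{i,j}(t)| ≤ τ^{2⌈d⌉+1} · cosh τ / (2⌈d⌉+1)!` with `d = dist(i,j)/R`
and `τ = √‖X‖·|t|`. -/
theorem lieb_robinson_local_P_one_xx {V : Type*} [Fintype V] [DecidableEq V]
    (G : SimpleGraph V) (hconn : G.Connected) (R : ℕ) (hR : 1 ≤ R)
    (X : Matrix V V ℝ) (hX : X.IsSymm)
    (hXloc : ∀ i j : V, R < G.dist i j → X i j = 0)
    (i j : V) (t : ℝ) :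
    let τ : ℝ := Real.sqrt (l2OpNorm X) * |t|
    let c : ℕ := (⌈(G.dist i j : ℝ) / R⌉).toNat
    Real.sqrt (l2OpNorm X) * |Cxx X i j t| ≤
      τ ^ (2 * c + 1) * Real.cosh τ / (Nat.factorial (2 * c + 1)) :=
  lieb_robinson_local_P_one_xx_general G hconn R X hXloc i j t
end

section
/- Assume P is the identity matrix and X_{i,j} = 0 whenever dist(i,j) > R. For all i, j ∈ L and all t ∈ ℝ, writing a_{i,j} = max{0, ⌈d_{i,j}−1⌉}, one has |C^{pp}_{i,j}(t)| ≤ √‖X‖ · τ^{2a_{i,j}+1} · cosh(τ)/(2a_{i,j}+1)!. -/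
/-- For `P = 𝟙`: `C^{pp}_{i,j}(t) = ∑_{n≥0} (−1)^n t^{2n+1} (X^{n+1})_{i,j}/(2n+1)!`,
which equals `i[p̂_i(t), p̂_j]`. -/
noncomputable def Cpp {V : Type*} [Fintype V] [DecidableEq V]
    (X : Matrix V V ℝ) (i j : V) (t : ℝ) : ℝ :=
  ∑' n : ℕ, (-1 : ℝ) ^ n * t ^ (2 * n + 1) * ((X ^ (n + 1)) i j) / (Nat.factorial (2 * n + 1))

/-!
Locality propagates to powers: `(X ^ m) i j = 0` as long as `m * R < dist i j`, so the first `a`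
terms of the series for `Cpp` vanish. Every remaining term is bounded through
`|(X ^ (n + 1)) i j| ≤ ‖X‖ ^ (n + 1)`, and `p! q! ≤ (p + q)!` factors the tail as
`τ ^ (2a + 1) / (2a + 1)!` times the power series of `cosh τ`.
-/

open scoped Nat

section OperatorNorm

variable {V : Type*} [Fintype V] [DecidableEq V]

lemma l2OpNorm_nonneg (M : Matrix V V ℝ) : 0 ≤ l2OpNorm M := norm_nonneg _

lemma abs_apply_le_l2OpNorm (M : Matrix V V ℝ) (i j : V) : |M i j| ≤ l2OpNorm M := by
  set T := Matrix.toEuclideanCLM (𝕜 := ℝ) M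
  have hT : T (EuclideanSpace.single j 1) i = M i j := by
    simp [T, EuclideanSpace.single, Matrix.mulVec_single]
  calc |M i j| = ‖T (EuclideanSpace.single j 1) i‖ := by rw [hT, Real.norm_eq_abs]
    _ ≤ ‖T (EuclideanSpace.single j 1)‖ := PiLp.norm_apply_le _ i
    _ ≤ ‖T‖ * ‖EuclideanSpace.single j (1 : ℝ)‖ := T.le_opNorm _
    _ = l2OpNorm M := by rw [PiLp.norm_single, norm_one, mul_one]; rfl

lemma l2OpNorm_pow_le (M : Matrix V V ℝ) {n : ℕ} (hn : n ≠ 0) :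
    l2OpNorm (M ^ n) ≤ l2OpNorm M ^ n := by
  unfold l2OpNorm
  rw [map_pow]
  exact norm_pow_le' _ (Nat.pos_of_ne_zero hn)

end OperatorNorm

lemma SimpleGraph.Connected.pow_apply_eq_zero {V α : Type*} [Fintype V] [DecidableEq V]
    [Semiring α] {G : SimpleGraph V} (hG : G.Connected) {R : ℕ} {X : Matrix V V α}
    (hX : ∀ i j, R < G.dist i j → X i j = 0) (m : ℕ) {i j : V} (hij : m * R < G.dist i j) :
    (X ^ m) i j = 0 := by
  induction m generalizing j with
  | zero =>
    have hne : i ≠ j := by rintro rfl; simp at hij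
    simp [Matrix.one_apply_ne hne]
  | succ m ih =>
    rw [pow_succ, Matrix.mul_apply]
    refine Finset.sum_eq_zero fun k _ => ?_
    by_cases hik : m * R < G.dist i k
    · rw [ih hik, zero_mul]
    · have hkj : R < G.dist k j := by
        have := hG.dist_triangle (u := i) (v := k) (w := j)
        rw [Nat.succ_mul] at hij
        omega
      rw [hX k j hkj, mul_zero]

lemma mul_lt_of_lt_toNat_ceil_div_sub_one {n d R : ℕ}
    (hn : n < (max 0 ⌈(d : ℝ) / R - 1⌉).toNat) : (n + 1) * R < d := by
  have hceil : (n : ℝ) + 1 < d / R := by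
    have h : ((n + 1 : ℕ) : ℤ) ≤ ⌈(d : ℝ) / R - 1⌉ := by omega
    have h' : ((n + 1 : ℕ) : ℝ) ≤ ⌈(d : ℝ) / R - 1⌉ := mod_cast h
    push_cast at h'
    linarith [Int.ceil_lt_add_one ((d : ℝ) / R - 1)]
  -- `d / 0 = 0` in Lean, so a positive quotient rules out `R = 0`
  have hR : (0 : ℝ) < R := by
    rcases (R.cast_nonneg (α := ℝ)).eq_or_lt with h | h
    · rw [← h, div_zero] at hceil; linarith
    · exact h
  exact_mod_cast (lt_div_iff₀ hR).mp hceil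

lemma pow_add_div_factorial_le {x : ℝ} (hx : 0 ≤ x) (p q : ℕ) :
    x ^ (p + q) / (p + q)! ≤ x ^ p / p ! * (x ^ q / q !) := by
  have hdvd : ((p ! * q ! : ℕ) : ℝ) ≤ (p + q)! := mod_cast
    Nat.le_of_dvd (Nat.factorial_pos _) (Nat.factorial_mul_factorial_dvd_factorial_add p q)
  rw [div_mul_div_comm, ← pow_add, ← Nat.cast_mul]
  gcongr

lemma abs_tsum_le_of_abs_le_sinh_terms {f : ℕ → ℝ} {s τ : ℝ} {a : ℕ} (hs : 0 ≤ s) (hτ : 0 ≤ τ)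
    (hf_zero : ∀ n < a, f n = 0) (hf_le : ∀ n, |f n| ≤ s * (τ ^ (2 * n + 1) / (2 * n + 1)!)) :
    |∑' n, f n| ≤ s * τ ^ (2 * a + 1) * Real.cosh τ / (2 * a + 1)! := by
  have hshift : ∑' m, f (m + a) = ∑' n, f n := by
    refine (add_left_injective a).tsum_eq fun n hn => ⟨n - a, Nat.sub_add_cancel ?_⟩
    by_contra h
    exact hn (hf_zero n (not_le.mp h))
  have hbound : HasSum (fun m => s * (τ ^ (2 * a + 1) / (2 * a + 1)!) * (τ ^ (2 * m) / (2 * m)!))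
      (s * (τ ^ (2 * a + 1) / (2 * a + 1)!) * Real.cosh τ) :=
    (Real.hasSum_cosh τ).mul_left _
  rw [← hshift, mul_div_right_comm, mul_div_assoc]
  refine tsum_of_norm_bounded (f := fun m => f (m + a)) hbound fun m => ?_
  rw [Real.norm_eq_abs, mul_assoc]
  refine (hf_le _).trans (mul_le_mul_of_nonneg_left ?_ hs)
  have := pow_add_div_factorial_le hτ (2 * a + 1) (2 * m)
  rwa [show 2 * a + 1 + 2 * m = 2 * (m + a) + 1 by ring] at this

lemma abs_cpp_term_le {V : Type*} [Fintype V] [DecidableEq V] (X : Matrix V V ℝ) (i j : V)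
    (t : ℝ) (n : ℕ) :
    |(-1 : ℝ) ^ n * t ^ (2 * n + 1) * (X ^ (n + 1)) i j / (2 * n + 1)!| ≤
      √(l2OpNorm X) * ((√(l2OpNorm X) * |t|) ^ (2 * n + 1) / (2 * n + 1)!) := by
  have hpow : √(l2OpNorm X) * (√(l2OpNorm X) * |t|) ^ (2 * n + 1) =
      l2OpNorm X ^ (n + 1) * |t| ^ (2 * n + 1) := by
    rw [mul_pow, ← mul_assoc, ← pow_succ', show 2 * n + 1 + 1 = 2 * (n + 1) by ring, pow_mul,
      Real.sq_sqrt (l2OpNorm_nonneg X)]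
  have hentry : |(X ^ (n + 1)) i j| ≤ l2OpNorm X ^ (n + 1) :=
    (abs_apply_le_l2OpNorm _ i j).trans (l2OpNorm_pow_le X n.succ_ne_zero)
  rw [← mul_div_assoc, hpow, abs_div, abs_mul, abs_mul, abs_pow, abs_pow, abs_neg, abs_one,
    one_pow, one_mul, Nat.abs_cast, mul_comm (|t| ^ _)]
  gcongr

theorem lieb_robinson_local_P_one_pp_general {V : Type*} [Fintype V] [DecidableEq V]
    (G : SimpleGraph V) (hconn : G.Connected) (R : ℕ)
    (X : Matrix V V ℝ)
    (hXloc : ∀ i j : V, R < G.dist i j → X i j = 0)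
    (i j : V) (t : ℝ) :
    let τ : ℝ := Real.sqrt (l2OpNorm X) * |t|
    let a : ℕ := (max 0 ⌈(G.dist i j : ℝ) / R - 1⌉).toNat
    |Cpp X i j t| ≤
      Real.sqrt (l2OpNorm X) * τ ^ (2 * a + 1) * Real.cosh τ / (Nat.factorial (2 * a + 1)) := by
  intro τ a
  refine abs_tsum_le_of_abs_le_sinh_terms (Real.sqrt_nonneg _) (by positivity) (fun n hn => ?_)
    (abs_cpp_term_le X i j t)
  rw [hconn.pow_apply_eq_zero hXloc (n + 1) (mul_lt_of_lt_toNat_ceil_div_sub_one hn), mul_zero,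
    zero_div]

/-- **Lieb-Robinson bound for local couplings and `P = 𝟙`**, `pp` commutator:
`|C^{pp}_{i,j}(t)| ≤ √‖X‖ · τ^{2a+1} · cosh τ / (2a+1)!` with
`a = max{0, ⌈dist(i,j)/R − 1⌉}` and `τ = √‖X‖·|t|`. -/
theorem lieb_robinson_local_P_one_pp {V : Type*} [Fintype V] [DecidableEq V]
    (G : SimpleGraph V) (hconn : G.Connected) (R : ℕ) (hR : 1 ≤ R)
    (X : Matrix V V ℝ) (hX : X.IsSymm)
    (hXloc : ∀ i j : V, R < G.dist i j → X i j = 0)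
    (i j : V) (t : ℝ) :
    let τ : ℝ := Real.sqrt (l2OpNorm X) * |t|
    let a : ℕ := (max 0 ⌈(G.dist i j : ℝ) / R - 1⌉).toNat
    |Cpp X i j t| ≤
      Real.sqrt (l2OpNorm X) * τ ^ (2 * a + 1) * Real.cosh τ / (Nat.factorial (2 * a + 1)) :=
  lieb_robinson_local_P_one_pp_general G hconn R X hXloc i j t
end
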